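/- (Proposition 1, cut metric.) Let H = (V, N, w, c) be a hypergraph, let ε ≥ 0 and k ≥ 1, and let Π be an ε-balanced k-way partition of H whose cut metric value cut_H(Π) is minimum among all ε-balanced k-way partitions of H. Let u and v be two distinct nodes that lie in the same block of Π, and let H' be the hypergraph obtained from H by contracting u and v. Then the minimum of the cut metric over all ε-balanced k-way partitions of H' equals cut_H(Π). -/

import Mathlib

open Finset

/-- A hypergraph `H = (V, N, w, c)`: a finite node set, an indexed family of
hyperedges each with a nonempty pin set contained in the node set, a
nonnegative node-weight function and a nonnegative hyperedge-cost function. -/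
structure WHypergraph (V E : Type*) [DecidableEq V] [Fintype E] where
  nodes : Finset V
  pins : E → Finset V
  pins_subset : ∀ e, pins e ⊆ nodes
  pins_nonempty : ∀ e, (pins e).Nonempty
  w : V → ℝ
  w_nonneg : ∀ x, 0 ≤ w x
  c : E → ℝ
  c_nonneg : ∀ e, 0 ≤ c e

namespace WHypergraph

variable {V E : Type*} [DecidableEq V] [Fintype E]

/-- `π` is a `k`-way partition of `H`: every node is assigned one of the `k`
blocks (blocks are automatically pairwise disjoint with union `V`), and every
block is nonempty. -/
def IsPartition (H : WHypergraph V E) (k : ℕ) (π : V → Fin k) : Prop :=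
  ∀ i : Fin k, ∃ x ∈ H.nodes, π x = i

/-- The connectivity set `Λ(e)` of a hyperedge under a partition: the set of
blocks containing at least one pin of `e`. -/
def connSet (H : WHypergraph V E) {k : ℕ} (π : V → Fin k) (e : E) : Finset (Fin k) :=
  (H.pins e).image π

/-- The connectivity `λ(e) = |Λ(e)|`. -/
def connectivity (H : WHypergraph V E) {k : ℕ} (π : V → Fin k) (e : E) : ℕ :=
  (H.connSet π e).card

/-- A hyperedge is a cut hyperedge if its connectivity exceeds one. -/
def IsCut (H : WHypergraph V E) {k : ℕ} (π : V → Fin k) (e : E) : Prop :=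
  1 < H.connectivity π e

/-- The connectivity metric `(λ − 1)_H(Π) = Σ_e (λ(e) − 1)·c(e)`. -/
def connMetric (H : WHypergraph V E) {k : ℕ} (π : V → Fin k) : ℝ :=
  ∑ e : E, ((H.connectivity π e : ℝ) - 1) * H.c e

/-- The cut metric `cut_H(Π) = Σ_{e cut} c(e)`. -/
def cutMetric (H : WHypergraph V E) {k : ℕ} (π : V → Fin k) : ℝ :=
  ∑ e ∈ Finset.univ.filter (fun e => 1 < H.connectivity π e), H.c e

/-- The weight of block `i` of the partition `π`. -/
def blockWeight (H : WHypergraph V E) {k : ℕ} (π : V → Fin k) (i : Fin k) : ℝ :=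
  ∑ x ∈ H.nodes.filter (fun x => π x = i), H.w x

/-- The total node weight of `H`. -/
def totalWeight (H : WHypergraph V E) : ℝ :=
  ∑ x ∈ H.nodes, H.w x

/-- `π` is `ε`-balanced: every block weighs at most
`(1+ε)·⌈(Σ_{v∈V} w(v))/k⌉`. -/
def IsBalanced (H : WHypergraph V E) (ε : ℝ) {k : ℕ} (π : V → Fin k) : Prop :=
  ∀ i : Fin k, H.blockWeight π i ≤ (1 + ε) * (⌈H.totalWeight / (k : ℝ)⌉ : ℝ)

/-- Contraction of the two nodes `u` and `v` (merging `v` into `u`):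
`v` is removed from the node set, `w(u)` becomes `w(u) + w(v)`, and in every
hyperedge containing `v` the pin `v` is replaced by `u`; costs are unchanged. -/
def contract (H : WHypergraph V E) (u v : V) : WHypergraph V E where
  nodes := insert u (H.nodes.erase v)
  pins := fun e => if v ∈ H.pins e then insert u ((H.pins e).erase v) else H.pins e
  pins_subset := by
    intro e x hx
    try dsimp only at hx
    by_cases h : v ∈ H.pins e
    · rw [if_pos h] at hx
      rcases Finset.mem_insert.mp hx with rfl | hx'
      · exact Finset.mem_insert_self _ _
      · rcases Finset.mem_erase.mp hx' with ⟨hxv, hxp⟩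
        exact Finset.mem_insert_of_mem (Finset.mem_erase.mpr ⟨hxv, H.pins_subset e hxp⟩)
    · rw [if_neg h] at hx
      have hxv : x ≠ v := fun hEq => h (hEq ▸ hx)
      exact Finset.mem_insert_of_mem (Finset.mem_erase.mpr ⟨hxv, H.pins_subset e hx⟩)
  pins_nonempty := by
    intro e
    try dsimp only
    by_cases h : v ∈ H.pins e
    · rw [if_pos h]; exact Finset.insert_nonempty _ _
    · rw [if_neg h]; exact H.pins_nonempty e
  w := fun x => if x = u then H.w u + H.w v else H.w x
  w_nonneg := by
    intro x
    try dsimp only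
    split
    · exact add_nonneg (H.w_nonneg u) (H.w_nonneg v)
    · exact H.w_nonneg x
  c := H.c
  c_nonneg := H.c_nonneg


/-- Contraction of a whole set `S` of nodes into a single new node `uS`:
the resulting node set is `(V \ S) ∪ {uS}`, the new node weighs
`Σ_{v∈S} w(v)`, and in every hyperedge meeting `S` the pins in `S` are
replaced by `uS`; costs are unchanged. -/
def contractSet (H : WHypergraph V E) (S : Finset V) (uS : V) : WHypergraph V E where
  nodes := insert uS (H.nodes \ S)
  pins := fun e => if (H.pins e ∩ S).Nonempty then insert uS (H.pins e \ S) else H.pins e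
  pins_subset := by
    intro e x hx
    try dsimp only at hx
    by_cases h : (H.pins e ∩ S).Nonempty
    · rw [if_pos h] at hx
      rcases Finset.mem_insert.mp hx with rfl | hx'
      · exact Finset.mem_insert_self _ _
      · rcases Finset.mem_sdiff.mp hx' with ⟨hxp, hxS⟩
        exact Finset.mem_insert_of_mem (Finset.mem_sdiff.mpr ⟨H.pins_subset e hxp, hxS⟩)
    · rw [if_neg h] at hx
      have hxS : x ∉ S := fun hmem =>
        h ⟨x, Finset.mem_inter.mpr ⟨hx, hmem⟩⟩
      exact Finset.mem_insert_of_mem (Finset.mem_sdiff.mpr ⟨H.pins_subset e hx, hxS⟩)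
  pins_nonempty := by
    intro e
    try dsimp only
    by_cases h : (H.pins e ∩ S).Nonempty
    · rw [if_pos h]; exact Finset.insert_nonempty _ _
    · rw [if_neg h]; exact H.pins_nonempty e
  w := fun x => if x = uS then ∑ y ∈ S, H.w y else H.w x
  w_nonneg := by
    intro x
    try dsimp only
    split
    · exact Finset.sum_nonneg fun y _ => H.w_nonneg y
    · exact H.w_nonneg x
  c := H.c
  c_nonneg := H.c_nonneg

end WHypergraph

/-!
Contracting `u` and `v` identifies the partitions of the contracted hypergraph with those
partitions of `H` that put `u` and `v` into the same block: `σ` corresponds to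
`σ ∘ Function.update id v u`. This correspondence preserves being a partition, block weights
(hence balance) and connectivity sets (hence the cut metric), so the minimum over the contracted
hypergraph is a minimum over a subfamily of the balanced partitions of `H` which still contains
the optimal `Π`.
-/

namespace WHypergraph

variable {V E : Type*} [DecidableEq V] [Fintype E] (H : WHypergraph V E) {k : ℕ} (u v : V)

theorem connSet_contract (σ : V → Fin k) (e : E) :
    (H.contract u v).connSet σ e = H.connSet (σ ∘ Function.update id v u) e := by
  unfold connSet contract
  dsimp only
  split_ifs with h
  · conv_rhs => rw [← Finset.insert_erase h]
    rw [Finset.image_insert, Finset.image_insert]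
    simp only [Function.comp_apply, Function.update_self]
    congr 1
    refine Finset.image_congr fun x hx => ?_
    simp [(Finset.mem_erase.mp hx).1]
  · refine Finset.image_congr fun x hx => ?_
    have hxv : x ≠ v := fun hxv => h (hxv ▸ hx)
    simp [hxv]

theorem cutMetric_contract (σ : V → Fin k) :
    (H.contract u v).cutMetric σ = H.cutMetric (σ ∘ Function.update id v u) := by
  simp only [cutMetric, connectivity, connSet_contract]
  rfl

variable {H u v}

theorem sum_contract_nodes_mul (hu : u ∈ H.nodes) (hv : v ∈ H.nodes) (huv : u ≠ v)
    (f : V → ℝ) :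
    ∑ x ∈ (H.contract u v).nodes, (H.contract u v).w x * f x
      = ∑ x ∈ H.nodes, H.w x * f (Function.update id v u x) := by
  have hu' : u ∈ H.nodes.erase v := Finset.mem_erase.mpr ⟨huv, hu⟩
  simp only [contract, Finset.insert_eq_of_mem hu']
  rw [← Finset.add_sum_erase _ _ hu', ← Finset.add_sum_erase _ _ hv,
    ← Finset.add_sum_erase _ _ hu', if_pos rfl]
  have hrest : ∀ x ∈ (H.nodes.erase v).erase u,
      (if x = u then H.w u + H.w v else H.w x) * f x
        = H.w x * f (Function.update id v u x) := fun x hx => by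
    obtain ⟨hxu, hx⟩ := Finset.mem_erase.mp hx
    simp [hxu, (Finset.mem_erase.mp hx).1]
  rw [Finset.sum_congr rfl hrest]
  simp only [Function.update_self, Function.update_of_ne huv, id_eq]
  ring

theorem totalWeight_contract (hu : u ∈ H.nodes) (hv : v ∈ H.nodes) (huv : u ≠ v) :
    (H.contract u v).totalWeight = H.totalWeight := by
  simpa [totalWeight] using sum_contract_nodes_mul hu hv huv 1

theorem blockWeight_contract (hu : u ∈ H.nodes) (hv : v ∈ H.nodes) (huv : u ≠ v)
    (σ : V → Fin k) (i : Fin k) :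
    (H.contract u v).blockWeight σ i = H.blockWeight (σ ∘ Function.update id v u) i := by
  simpa [blockWeight, Finset.sum_filter] using
    sum_contract_nodes_mul hu hv huv fun x => if σ x = i then 1 else 0

theorem isPartition_contract_iff (hu : u ∈ H.nodes) (huv : u ≠ v) (σ : V → Fin k) :
    (H.contract u v).IsPartition k σ ↔ H.IsPartition k (σ ∘ Function.update id v u) := by
  refine forall_congr' fun i => ⟨?_, ?_⟩
  · rintro ⟨x, hx, rfl⟩
    rcases Finset.mem_insert.mp hx with rfl | hx
    · exact ⟨x, hu, by simp [huv]⟩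
    · obtain ⟨hxv, hx⟩ := Finset.mem_erase.mp hx
      exact ⟨x, hx, by simp [hxv]⟩
  · rintro ⟨x, hx, rfl⟩
    by_cases hxv : x = v
    · exact ⟨u, Finset.mem_insert_self _ _, by simp [hxv]⟩
    · exact ⟨x, Finset.mem_insert_of_mem (Finset.mem_erase.mpr ⟨hxv, hx⟩), by simp [hxv]⟩

theorem isBalanced_contract_iff (hu : u ∈ H.nodes) (hv : v ∈ H.nodes) (huv : u ≠ v)
    (ε : ℝ) (σ : V → Fin k) :
    (H.contract u v).IsBalanced ε σ ↔ H.IsBalanced ε (σ ∘ Function.update id v u) := by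
  simp only [IsBalanced, blockWeight_contract hu hv huv, totalWeight_contract hu hv huv]

end WHypergraph

theorem Function.comp_update_id_of_eq {α β : Type*} [DecidableEq α] {σ : α → β} {u v : α}
    (h : σ u = σ v) : σ ∘ Function.update id v u = σ := by
  funext x
  by_cases hxv : x = v
  · simp [hxv, h]
  · simp [hxv]

open WHypergraph in
theorem contract_min_cutMetric_general {V E : Type*} [DecidableEq V] [Fintype E]
    (H : WHypergraph V E) (ε : ℝ) (k : ℕ)
    (π : V → Fin k)
    (hπ : H.IsPartition k π) (hbal : H.IsBalanced ε π)
    (hopt : ∀ π' : V → Fin k, H.IsPartition k π' → H.IsBalanced ε π' →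
      H.cutMetric π ≤ H.cutMetric π')
    (u v : V) (hu : u ∈ H.nodes) (hv : v ∈ H.nodes) (huv : u ≠ v)
    (hsame : π u = π v) :
    IsLeast {r : ℝ | ∃ π' : V → Fin k,
        (H.contract u v).IsPartition k π' ∧ (H.contract u v).IsBalanced ε π' ∧
        r = (H.contract u v).cutMetric π'}
      (H.cutMetric π) := by
  have hlift : π ∘ Function.update id v u = π := Function.comp_update_id_of_eq hsame
  refine ⟨⟨π, ?_, ?_, ?_⟩, ?_⟩
  · rwa [isPartition_contract_iff hu huv, hlift]
  · rwa [isBalanced_contract_iff hu hv huv, hlift]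
  · rw [cutMetric_contract, hlift]
  · rintro r ⟨σ, hσ, hσbal, rfl⟩
    rw [cutMetric_contract]
    exact hopt _ ((isPartition_contract_iff hu huv σ).mp hσ)
      ((isBalanced_contract_iff hu hv huv ε σ).mp hσbal)

/-- Proposition 1, cut metric: if `Π` minimizes the cut metric
among all `ε`-balanced `k`-way partitions of `H`, and `u, v` are distinct nodes
in the same block of `Π`, then the minimum of the cut metric over all
`ε`-balanced `k`-way partitions of the hypergraph obtained by contracting `u`
and `v` equals `cut_H(Π)`. -/
theorem contract_min_cutMetric {V E : Type*} [DecidableEq V] [Fintype E]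
    (H : WHypergraph V E) (ε : ℝ) (hε : 0 ≤ ε) (k : ℕ) (hk : 1 ≤ k)
    (π : V → Fin k)
    (hπ : H.IsPartition k π) (hbal : H.IsBalanced ε π)
    (hopt : ∀ π' : V → Fin k, H.IsPartition k π' → H.IsBalanced ε π' →
      H.cutMetric π ≤ H.cutMetric π')
    (u v : V) (hu : u ∈ H.nodes) (hv : v ∈ H.nodes) (huv : u ≠ v)
    (hsame : π u = π v) :
    IsLeast {r : ℝ | ∃ π' : V → Fin k,
        (H.contract u v).IsPartition k π' ∧ (H.contract u v).IsBalanced ε π' ∧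
        r = (H.contract u v).cutMetric π'}
      (H.cutMetric π) :=
  contract_min_cutMetric_general H ε k π hπ hbal hopt u v hu hv huv hsame
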